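/- Let 𝓛 be a line (a one-dimensional affine subspace) in the Euclidean plane ℝ² that does not pass through the origin, and let c be a positive real number with c ≠ 1. Then there exists x₀ ∈ 𝓛 such that ‖x₀‖ ≤ ‖x‖ for all x ∈ 𝓛, and for every point x ∈ 𝓛 the infimum distance from x to the set c𝓛 := {c·y : y ∈ 𝓛} equals |1 − c|·‖x₀‖. -/

import Mathlib

/-!
Let `x₀` be the foot of the perpendicular from the origin to `𝓛`. For `x, y ∈ 𝓛` we have
`x - c • y = (1 - c) • x₀ + v` with `v` in the direction of `𝓛`, hence orthogonal to `x₀`, so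
Pythagoras gives `‖x - c • y‖ ≥ |1 - c| * ‖x₀‖`, with equality for `y = x₀ + c⁻¹ • (x - x₀)`.
The case `c = 0` of the inequality says that `x₀` has minimal norm on `𝓛`.
-/

open Pointwise

namespace AffineSubspace

variable {V : Type*} [NormedAddCommGroup V] [InnerProductSpace ℝ V]

theorem nonempty_of_finrank_direction_pos {s : AffineSubspace ℝ V}
    (hs : 0 < Module.finrank ℝ s.direction) : (s : Set V).Nonempty :=
  s.eq_bot_or_nonempty.resolve_left fun h => by
    rw [h, direction_bot, finrank_bot] at hs
    exact lt_irrefl 0 hs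

theorem coe_orthogonalProjection_zero_mem_direction_orthogonal (s : AffineSubspace ℝ V)
    [Nonempty s] [s.direction.HasOrthogonalProjection] :
    (EuclideanGeometry.orthogonalProjection s 0 : V) ∈ s.directionᗮ := by
  simpa using s.directionᗮ.neg_mem
    (EuclideanGeometry.vsub_orthogonalProjection_mem_direction_orthogonal s 0)

variable {s : AffineSubspace ℝ V} {x₀ : V}

theorem sub_smul_mem_direction (hx₀ : x₀ ∈ s) {x y : V} (hx : x ∈ s) (hy : y ∈ s) (c : ℝ) :
    x - c • y - (1 - c) • x₀ ∈ s.direction := by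
  have hxv : x - x₀ ∈ s.direction := vsub_mem_direction hx hx₀
  have hyv : y - x₀ ∈ s.direction := vsub_mem_direction hy hx₀
  convert s.direction.sub_mem hxv (s.direction.smul_mem c hyv) using 1
  module

theorem abs_one_sub_mul_norm_le_norm_sub_smul (hx₀ : x₀ ∈ s) (hperp : x₀ ∈ s.directionᗮ)
    {x y : V} (hx : x ∈ s) (hy : y ∈ s) (c : ℝ) :
    |1 - c| * ‖x₀‖ ≤ ‖x - c • y‖ := by
  set v := x - c • y - (1 - c) • x₀
  have hv : inner ℝ ((1 - c) • x₀) v = 0 := Submodule.inner_left_of_mem_orthogonal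
    (sub_smul_mem_direction hx₀ hx hy c) (s.directionᗮ.smul_mem (1 - c) hperp)
  calc |1 - c| * ‖x₀‖ = ‖(1 - c) • x₀‖ := by rw [norm_smul, Real.norm_eq_abs]
    _ ≤ ‖(1 - c) • x₀ + v‖ := by
      refine (mul_self_le_mul_self_iff (norm_nonneg _) (norm_nonneg _)).mpr ?_
      rw [norm_add_sq_eq_norm_sq_add_norm_sq_real hv]
      exact le_add_of_nonneg_right (mul_self_nonneg _)
    _ = ‖x - c • y‖ := by rw [add_sub_cancel]

theorem norm_le_norm_of_mem_direction_orthogonal (hx₀ : x₀ ∈ s) (hperp : x₀ ∈ s.directionᗮ)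
    {x : V} (hx : x ∈ s) : ‖x₀‖ ≤ ‖x‖ := by
  simpa using abs_one_sub_mul_norm_le_norm_sub_smul hx₀ hperp hx hx 0

theorem exists_mem_sub_smul_eq (hx₀ : x₀ ∈ s) {x : V} (hx : x ∈ s) {c : ℝ} (hc : c ≠ 0) :
    ∃ y ∈ s, x - c • y = (1 - c) • x₀ := by
  refine ⟨c⁻¹ • (x - x₀) +ᵥ x₀,
    vadd_mem_of_mem_direction (s.direction.smul_mem _ (vsub_mem_direction hx hx₀)) hx₀, ?_⟩
  rw [vadd_eq_add, smul_add, smul_smul, mul_inv_cancel₀ hc]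
  module

theorem infDist_smul_eq_abs_one_sub_mul_norm (hx₀ : x₀ ∈ s) (hperp : x₀ ∈ s.directionᗮ)
    {x : V} (hx : x ∈ s) {c : ℝ} (hc : c ≠ 0) :
    Metric.infDist x (c • (s : Set V)) = |1 - c| * ‖x₀‖ := by
  refine le_antisymm ?_ ?_
  · obtain ⟨y, hy, hxy⟩ := exists_mem_sub_smul_eq hx₀ hx hc
    calc Metric.infDist x (c • (s : Set V)) ≤ dist x (c • y) :=
          Metric.infDist_le_dist_of_mem (Set.smul_mem_smul_set hy)
      _ = |1 - c| * ‖x₀‖ := by rw [dist_eq_norm, hxy, norm_smul, Real.norm_eq_abs]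
  · refine (Metric.le_infDist (Set.Nonempty.smul_set ⟨x₀, hx₀⟩)).2 ?_
    rintro _ ⟨y, hy, rfl⟩
    rw [dist_eq_norm]
    exact abs_one_sub_mul_norm_le_norm_sub_smul hx₀ hperp hx hy c

end AffineSubspace

open AffineSubspace in
theorem dist_line_smul_line_general
    (𝓛 : AffineSubspace ℝ (EuclideanSpace ℝ (Fin 2)))
    (hdim : Module.finrank ℝ 𝓛.direction = 1)
    (c : ℝ) (hc : 0 < c) :
    ∃ x₀ ∈ 𝓛, (∀ x ∈ 𝓛, ‖x₀‖ ≤ ‖x‖) ∧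
      ∀ x ∈ 𝓛,
        Metric.infDist x ((fun y => c • y) '' (𝓛 : Set (EuclideanSpace ℝ (Fin 2)))) =
          |1 - c| * ‖x₀‖ := by
  have : Nonempty 𝓛 := (nonempty_of_finrank_direction_pos (hdim ▸ one_pos)).to_subtype
  set x₀ := (EuclideanGeometry.orthogonalProjection 𝓛 0 : EuclideanSpace ℝ (Fin 2))
  have hx₀ : x₀ ∈ 𝓛 := EuclideanGeometry.orthogonalProjection_mem 0
  have hperp := coe_orthogonalProjection_zero_mem_direction_orthogonal 𝓛
  exact ⟨x₀, hx₀, fun x hx => norm_le_norm_of_mem_direction_orthogonal hx₀ hperp hx,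
    fun x hx => infDist_smul_eq_abs_one_sub_mul_norm hx₀ hperp hx hc.ne'⟩

/-- Lemma 1.2, second part: for a line `𝓛` in `ℝ²` not through the origin and
`0 < c`, `c ≠ 1`, there is a point `x₀ ∈ 𝓛` of minimal norm, and the infimum
distance from any point of `𝓛` to `c𝓛` equals `|1 - c| * ‖x₀‖`. -/
theorem dist_line_smul_line
    (𝓛 : AffineSubspace ℝ (EuclideanSpace ℝ (Fin 2)))
    (hdim : Module.finrank ℝ 𝓛.direction = 1)
    (h0 : (0 : EuclideanSpace ℝ (Fin 2)) ∉ 𝓛)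
    (c : ℝ) (hc : 0 < c) (hc1 : c ≠ 1) :
    ∃ x₀ ∈ 𝓛, (∀ x ∈ 𝓛, ‖x₀‖ ≤ ‖x‖) ∧
      ∀ x ∈ 𝓛,
        Metric.infDist x ((fun y => c • y) '' (𝓛 : Set (EuclideanSpace ℝ (Fin 2)))) =
          |1 - c| * ‖x₀‖ :=
  dist_line_smul_line_general 𝓛 hdim c hc
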